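/- Let R = A_{n-1} be realized as {e_i - e_j : i ≠ j in Z/nZ}, let w be the Coxeter element with w(e_i) = e_{i+1}, and for q ∈ (Z/nZ)^× let ν_q be the automorphism with ν_q(e_i) = e_{qi}. Then the sign of the permutation of the orbit set ⟨w⟩\R induced by ν_q equals the sign of the multiplication-by-q permutation of Z/nZ. -/

import Mathlib

open scoped Classical

/-- The root `e_i - e_j` of the root system `A_{n-1}`, realised in the space of real-valued
functions on `ℤ/nℤ`. -/
noncomputable def rootA (n : ℕ) (i j : ZMod n) : ZMod n → ℝ :=
  Pi.single i 1 - Pi.single j 1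

/-- The root system `A_{n-1} = {e_i - e_j : i ≠ j in ℤ/nℤ}`. -/
noncomputable def rootsA (n : ℕ) [NeZero n] : Finset (ZMod n → ℝ) :=
  Finset.image (fun p : ZMod n × ZMod n => rootA n p.1 p.2)
    (Finset.univ.filter fun p : ZMod n × ZMod n => p.1 ≠ p.2)

/-- The Coxeter element `w` of `A_{n-1}` with `w (e_i) = e_{i+1}`, as the linear automorphism
`(w f) k = f (k - 1)` of the ambient space. -/
noncomputable def wCoxA (n : ℕ) : (ZMod n → ℝ) ≃ₗ[ℝ] (ZMod n → ℝ) :=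
  LinearEquiv.funCongrLeft ℝ ℝ (Equiv.subRight (1 : ZMod n))

/-- The orbit equivalence relation of the cyclic group generated by a linear automorphism `v`
on a (stable) finite set of vectors. -/
def orbitSetoidOn {V : Type*} [AddCommGroup V] [Module ℝ V]
    (v : V ≃ₗ[ℝ] V) (S : Finset V) : Setoid {x : V // x ∈ S} where
  r x y := ∃ m : ℤ, (v ^ m) x.1 = y.1
  iseqv := by
    refine ⟨fun x => ⟨0, by rw [zpow_zero]; rfl⟩, ?_, ?_⟩
    · rintro x y ⟨m, hm⟩
      exact ⟨-m, by rw [zpow_neg, ← hm]; exact (v ^ m).symm_apply_apply x.1⟩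
    · rintro x y z ⟨m, hm⟩ ⟨k, hk⟩
      refine ⟨k + m, ?_⟩
      rw [zpow_add]
      show (v ^ k) ((v ^ m) x.1) = z.1
      rw [hm, hk]


/-!
Since `w^i (e_0 - e_c) = e_i - e_{i+c}`, every root `e_i - e_j` lies in the `⟨w⟩`-orbit of
`e_0 - e_{j-i}`, and distinct `c ≠ 0` give distinct orbits; so `c ↦ ⟨w⟩ (e_0 - e_c)` identifies
the nonzero residues mod `n` with `⟨w⟩\R`. Through this bijection `ν_q` becomes multiplication by
`q` on the nonzero residues, that is, `π` with its fixed point `0` removed, which has the same sign.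
-/

lemma wCoxA_zpow_apply (n : ℕ) (m : ℤ) (f : ZMod n → ℝ) (k : ZMod n) :
    (wCoxA n ^ m) f k = f (k - m) := by
  induction m using Int.induction_on generalizing f k with
  | zero => simp
  | succ i ih =>
    rw [zpow_add_one, LinearEquiv.mul_apply, ih]
    simp [wCoxA, sub_sub]
  | pred i ih =>
    rw [zpow_sub_one, LinearEquiv.mul_apply, ih]
    simp only [wCoxA, LinearEquiv.coe_inv, LinearEquiv.funCongrLeft_symm,
      LinearEquiv.funCongrLeft_apply, LinearMap.funLeft_apply, Equiv.subRight_symm_apply]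
    congr 1
    push_cast
    ring

lemma rootA_apply (n : ℕ) (i j k : ZMod n) :
    rootA n i j k = (if k = i then 1 else 0) - (if k = j then 1 else 0) := by
  simp [rootA, Pi.single_apply]

lemma wCoxA_zpow_rootA (n : ℕ) (m : ℤ) (i j : ZMod n) :
    (wCoxA n ^ m) (rootA n i j) = rootA n (i + m) (j + m) := by
  funext k
  simp only [wCoxA_zpow_apply, rootA_apply, sub_eq_iff_eq_add]

lemma eq_and_eq_of_rootA_eq (n : ℕ) {i j i' j' : ZMod n} (h : i ≠ j)
    (e : rootA n i j = rootA n i' j') : i = i' ∧ j = j' := by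
  have hi := congrFun e i
  have hj := congrFun e j
  simp only [rootA_apply, if_neg h, if_neg (Ne.symm h)] at hi hj
  constructor
  · by_contra hne
    simp only [if_neg hne] at hi
    split_ifs at hi <;> norm_num at hi
  · by_contra hne
    simp only [if_neg hne] at hj
    split_ifs at hj <;> norm_num at hj

lemma rootA_mem_rootsA (n : ℕ) [NeZero n] {i j : ZMod n} (h : i ≠ j) : rootA n i j ∈ rootsA n :=
  Finset.mem_image.mpr ⟨(i, j), by simpa using h, rfl⟩

noncomputable def orbitOfRootA (n : ℕ) [NeZero n] (c : {c : ZMod n // c ≠ 0}) :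
    Quotient (orbitSetoidOn (wCoxA n) (rootsA n)) :=
  Quotient.mk _ ⟨rootA n 0 c, rootA_mem_rootsA n (Ne.symm c.2)⟩

lemma orbitOfRootA_injective (n : ℕ) [NeZero n] : Function.Injective (orbitOfRootA n) := by
  rintro ⟨c, hc⟩ ⟨c', hc'⟩ hcc'
  obtain ⟨m, hm⟩ := Quotient.exact hcc'
  rw [wCoxA_zpow_rootA] at hm
  obtain ⟨hm0, hcm⟩ := eq_and_eq_of_rootA_eq n (by rwa [Ne, add_left_inj, eq_comm]) hm
  rw [zero_add] at hm0
  simpa [hm0] using hcm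

lemma orbitOfRootA_surjective (n : ℕ) [NeZero n] : Function.Surjective (orbitOfRootA n) := by
  refine Quotient.ind fun ⟨x, hx⟩ => ?_
  obtain ⟨⟨i, j⟩, hij, rfl⟩ := Finset.mem_image.mp hx
  have hij : i ≠ j := (Finset.mem_filter.mp hij).2
  refine ⟨⟨j - i, sub_ne_zero.mpr (Ne.symm hij)⟩, Quotient.sound ⟨(i.val : ℤ), ?_⟩⟩
  simp [wCoxA_zpow_rootA]

noncomputable def orbitEquivNonzero (n : ℕ) [NeZero n] :
    {c : ZMod n // c ≠ 0} ≃ Quotient (orbitSetoidOn (wCoxA n) (rootsA n)) :=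
  Equiv.ofBijective _ ⟨orbitOfRootA_injective n, orbitOfRootA_surjective n⟩

/-- Let `R = A_{n-1}` be realised as `{e_i - e_j : i ≠ j in ℤ/nℤ}`, let `w` be the Coxeter
element with `w(e_i) = e_{i+1}`, and for `q ∈ (ℤ/nℤ)ˣ` let `ν_q` be the automorphism with
`ν_q(e_i) = e_{qi}`.  Then the sign of the permutation of the orbit set `⟨w⟩\R` induced by
`ν_q` equals the sign of the multiplication-by-`q` permutation of `ℤ/nℤ`. -/
theorem sign_norm_on_coxeter_orbits_eq_sign_mul
    (n : ℕ) [NeZero n] (q : (ZMod n)ˣ)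
    (σ : Equiv.Perm (Quotient (orbitSetoidOn (wCoxA n) (rootsA n))))
    (hσ : ∀ (i j : ZMod n), i ≠ j →
      ∀ (h1 : rootA n i j ∈ rootsA n) (h2 : rootA n (q * i) (q * j) ∈ rootsA n),
        σ (Quotient.mk (orbitSetoidOn (wCoxA n) (rootsA n)) ⟨rootA n i j, h1⟩) =
          Quotient.mk (orbitSetoidOn (wCoxA n) (rootsA n)) ⟨rootA n (q * i) (q * j), h2⟩)
    (π : Equiv.Perm (ZMod n)) (hπ : ∀ x : ZMod n, π x = (q : ZMod n) * x) :
    Equiv.Perm.sign σ = Equiv.Perm.sign π := by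
  have hπ_ne_zero : ∀ x, π x ≠ 0 ↔ x ≠ 0 := fun x => by
    rw [hπ, Ne, Units.mul_right_eq_zero]
  have hσ_orbit : ∀ c, σ (orbitOfRootA n c) = orbitOfRootA n (π.subtypePerm hπ_ne_zero c) := by
    rintro ⟨c, hc⟩
    have hqc : (q : ZMod n) * c ≠ 0 := by rwa [← hπ, hπ_ne_zero]
    have h := hσ 0 c (Ne.symm hc) (rootA_mem_rootsA n (Ne.symm hc))
      (rootA_mem_rootsA n (by rw [mul_zero]; exact Ne.symm hqc))
    simpa [orbitOfRootA, hπ] using h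
  calc Equiv.Perm.sign σ = Equiv.Perm.sign (π.subtypePerm hπ_ne_zero) :=
        (Equiv.Perm.sign_eq_sign_of_equiv _ _ (orbitEquivNonzero n) fun c =>
          (hσ_orbit c).symm).symm
    _ = Equiv.Perm.sign π :=
        Equiv.Perm.sign_subtypePerm π (p := (· ≠ 0)) hπ_ne_zero fun x hx hx0 =>
          hx (by simp [hx0, hπ])
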